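/- arXiv:2010.00791 — 6 statements merged into one kernel-verified Lean document; each statement's English description precedes it below -/
import Mathlib

section
/- Let C ⊆ (ℕ → ℚ) be the set of fast converging Cauchy sequences, equipped with the subspace topology induced from the product topology on ∏_{n : ℕ} ℚ, where ℚ carries the discrete topology. Then the limit map L : C → ℝ defined by L(α) = lim α is continuous, surjective, and a quotient map. -/
/-- A copy of `ℚ` carrying the discrete topology. -/
def Qd : Type := ℚ

instance : Field Qd := inferInstanceAs (Field ℚ)
instance : LinearOrder Qd := inferInstanceAs (LinearOrder ℚ)
instance : IsStrictOrderedRing Qd := inferInstanceAs (IsStrictOrderedRing ℚ)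
instance : TopologicalSpace Qd := ⊥
instance : DiscreteTopology Qd := ⟨rfl⟩

/-- View a member of the discrete copy of `ℚ` as a rational number. -/
def Qd.toRat (q : Qd) : ℚ := q

/-- A fast converging Cauchy sequence of rationals: for all `m < n`,
`|α m - α n| < 2^{-(m+1)}`. -/
def FastCauchy (α : ℕ → Qd) : Prop :=
  ∀ m n : ℕ, m < n → |α m - α n| < (1 / 2 : Qd) ^ (m + 1)

/-- The space of fast converging Cauchy sequences, as a subspace of the
product `∏ (n : ℕ), ℚ` with `ℚ` discrete. -/
def CauchySpace : Type := {α : ℕ → Qd // FastCauchy α}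

instance : TopologicalSpace CauchySpace :=
  inferInstanceAs (TopologicalSpace {α : ℕ → Qd // FastCauchy α})

open Filter Topology

namespace Stmt4Aux

/-- Real version of fast Cauchy. -/
def RFC (α : ℕ → ℚ) : Prop :=
  ∀ m n : ℕ, m < n → |(α m : ℝ) - (α n : ℝ)| < (1/2 : ℝ) ^ (m + 1)

lemma rfc_iff (α : ℕ → Qd) : FastCauchy α ↔ RFC (fun n => (α n).toRat) := by
  constructor
  · intro h m n hmn
    have h' : |((α m).toRat : ℚ) - (α n).toRat| < (1/2 : ℚ) ^ (m+1) := h m n hmn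
    have := (Rat.cast_lt (K := ℝ)).2 h'
    push_cast at this
    convert this using 2 <;> norm_num
  · intro h m n hmn
    have := h m n hmn
    have h' : |((α m).toRat : ℚ) - (α n).toRat| < (1/2 : ℚ) ^ (m+1) := by
      rw [← Rat.cast_lt (K := ℝ)]
      push_cast
      convert this using 2 <;> norm_num
    exact h' 

lemma rfc_cauchySeq {α : ℕ → ℚ} (h : RFC α) : CauchySeq (fun n => ((α n : ℝ))) := by
  apply cauchySeq_of_le_geometric (1/2) (1/2) (by norm_num)
  intro n
  rw [Real.dist_eq]
  have := h n (n+1) (Nat.lt_succ_self n)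
  have e : (1/2 : ℝ)^(n+1) = (1/2) * (1/2)^n := by ring
  linarith [this, e ▸ this]

lemma rfc_exists_lim {α : ℕ → ℚ} (h : RFC α) :
    ∃ x : ℝ, Tendsto (fun n => ((α n : ℝ))) atTop (𝓝 x) :=
  cauchySeq_tendsto_of_complete (rfc_cauchySeq h)

noncomputable def Lmap (α : CauchySpace) : ℝ :=
  (rfc_exists_lim ((rfc_iff α.1).1 α.2)).choose

lemma Lmap_tendsto (α : CauchySpace) :
    Tendsto (fun n => (((α.1 n).toRat : ℝ))) atTop (𝓝 (Lmap α)) :=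
  (rfc_exists_lim ((rfc_iff α.1).1 α.2)).choose_spec

lemma Lmap_dist (α : CauchySpace) (m : ℕ) :
    |Lmap α - ((α.1 m).toRat : ℝ)| ≤ (1/2 : ℝ) ^ (m+1) := by
  have ht : Tendsto (fun n => |(((α.1 m).toRat : ℝ)) - ((α.1 n).toRat : ℝ)|) atTop
      (𝓝 |((α.1 m).toRat : ℝ) - Lmap α|) :=
    (tendsto_const_nhds.sub (Lmap_tendsto α)).abs
  have hle := le_of_tendsto ht (eventually_atTop.2 ⟨m+1, fun n hn =>
    le_of_lt (((rfc_iff α.1).1 α.2) m n (by omega))⟩)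
  rwa [abs_sub_comm] at hle

/-- Rational approximations to a real, with accuracy `2^{-(n+3)}`. -/
noncomputable def approx (x : ℝ) (n : ℕ) : ℚ :=
  (exists_rat_near x (show (0:ℝ) < (1/2)^(n+3) by positivity)).choose

lemma approx_spec (x : ℝ) (n : ℕ) : |x - (approx x n : ℝ)| < (1/2 : ℝ)^(n+3) :=
  (exists_rat_near x (show (0:ℝ) < (1/2)^(n+3) by positivity)).choose_spec

lemma half_pow_le {i j : ℕ} (h : i ≤ j) : (1/2 : ℝ)^j ≤ (1/2)^i :=
  pow_le_pow_of_le_one (by norm_num) (by norm_num) h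

/-- Glue a prefix of `α` (up to index `m`) with approximations of `y`. -/
noncomputable def glue (α : ℕ → ℚ) (m : ℕ) (y : ℝ) (n : ℕ) : ℚ :=
  if n ≤ m then α n else approx y n

lemma glue_prefix (α : ℕ → ℚ) (m : ℕ) (y : ℝ) {i : ℕ} (hi : i ≤ m) :
    glue α m y i = α i := if_pos hi

lemma glue_rfc (α : ℕ → ℚ) (m : ℕ) (y : ℝ)
    (hα : ∀ i j : ℕ, i < j → j ≤ m → |(α i : ℝ) - (α j : ℝ)| < (1/2 : ℝ)^(i+1))
    (hy : ∀ i ≤ m, |(α i : ℝ) - y| < 3 * (1/2 : ℝ)^(i+3)) :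
    RFC (glue α m y) := by
  intro i j hij
  rcases le_or_gt j m with hjm | hjm
  · rw [glue_prefix α m y (le_trans (le_of_lt hij) hjm), glue_prefix α m y hjm]
    exact hα i j hij hjm
  · have hj : ¬ j ≤ m := not_le.2 hjm
    have haj := approx_spec y j
    have hjb : (1/2:ℝ)^(j+3) ≤ (1/2)^(i+4) := half_pow_le (by omega)
    rcases le_or_gt i m with him | him
    · -- i ≤ m < j
      rw [glue_prefix α m y him]
      simp only [glue, if_neg hj]
      have h1 := hy i him
      have e1 : (1/2:ℝ)^(i+3) = (1/2)^(i+1) * (1/4) := by rw [show i+3 = (i+1)+2 by omega, pow_add]; norm_num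
      have e2 : (1/2:ℝ)^(i+4) = (1/2)^(i+1) * (1/8) := by rw [show i+4 = (i+1)+3 by omega, pow_add]; norm_num
      have habs : |(α i : ℝ) - (approx y j : ℝ)| ≤ |(α i : ℝ) - y| + |y - (approx y j : ℝ)| := by
        calc |(α i : ℝ) - (approx y j : ℝ)| = |((α i : ℝ) - y) + (y - (approx y j : ℝ))| := by ring_nf
          _ ≤ _ := abs_add_le _ _
      have hp : (0:ℝ) < (1/2)^(i+1) := by positivity
      nlinarith [habs, h1, haj, hjb]
    · -- m < i < j
      have hi' : ¬ i ≤ m := not_le.2 him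
      simp only [glue, if_neg hi', if_neg hj]
      have hai := approx_spec y i
      have e1 : (1/2:ℝ)^(i+3) = (1/2)^(i+1) * (1/4) := by rw [show i+3 = (i+1)+2 by omega, pow_add]; norm_num
      have e2 : (1/2:ℝ)^(i+4) = (1/2)^(i+1) * (1/8) := by rw [show i+4 = (i+1)+3 by omega, pow_add]; norm_num
      have habs : |(approx y i : ℝ) - (approx y j : ℝ)| ≤ |y - (approx y i : ℝ)| + |y - (approx y j : ℝ)| := by
        calc |(approx y i : ℝ) - (approx y j : ℝ)|
            = |-(y - (approx y i : ℝ)) + (y - (approx y j : ℝ))| := by ring_nf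
          _ ≤ |-(y - (approx y i : ℝ))| + |y - (approx y j : ℝ)| := abs_add_le _ _
          _ = _ := by rw [abs_neg]
      have hp : (0:ℝ) < (1/2)^(i+1) := by positivity
      nlinarith [habs, hai, haj, hjb]

lemma half_pow_tendsto : Tendsto (fun n : ℕ => (1/2 : ℝ)^n) atTop (𝓝 0) := by
  apply tendsto_pow_atTop_nhds_zero_of_lt_one <;> norm_num

lemma glue_tendsto (α : ℕ → ℚ) (m : ℕ) (y : ℝ) :
    Tendsto (fun n => ((glue α m y n : ℝ))) atTop (𝓝 y) := by
  rw [Metric.tendsto_atTop]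
  intro ε hε
  obtain ⟨N, hN⟩ := (Metric.tendsto_atTop.1 half_pow_tendsto) ε hε
  refine ⟨max N (m+1), fun n hn => ?_⟩
  have hn1 : ¬ n ≤ m := by omega
  have hn2 : N ≤ n := le_trans (le_max_left _ _) hn
  have := approx_spec y n
  have hb : (1/2:ℝ)^(n+3) ≤ (1/2)^n := half_pow_le (by omega)
  have hN' := hN n hn2
  rw [Real.dist_eq] at hN' ⊢
  simp only [sub_zero, abs_of_nonneg (by positivity : (0:ℝ) ≤ (1/2:ℝ)^n)] at hN'
  simp only [glue, if_neg hn1]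
  rw [abs_sub_comm]
  linarith

lemma rfc_approx (x : ℝ) : RFC (approx x) := by
  have h := glue_rfc (approx x) 0 x
    (fun i j hij hjm => by omega)
    (fun i hi => by
      have := approx_spec x i
      rw [abs_sub_comm]
      have hp : (0:ℝ) < (1/2)^(i+3) := by positivity
      linarith)
  intro i j hij
  have := h i j hij
  rcases Nat.eq_zero_or_pos i with hi0 | hi0
  · subst hi0
    rwa [glue_prefix _ _ _ (le_refl 0), show glue (approx x) 0 x j = approx x j from if_neg (by omega)] at this
  · rwa [show glue (approx x) 0 x i = approx x i from if_neg (by omega),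
      show glue (approx x) 0 x j = approx x j from if_neg (by omega)] at this

/-- Package a rational sequence satisfying `RFC` as an element of `CauchySpace`. -/
def pack (α : ℕ → ℚ) (h : RFC α) : CauchySpace :=
  ⟨α, (rfc_iff α).2 h⟩

lemma Lmap_pack {α : ℕ → ℚ} (h : RFC α) {y : ℝ}
    (ht : Tendsto (fun n => ((α n : ℝ))) atTop (𝓝 y)) : Lmap (pack α h) = y :=
  tendsto_nhds_unique (Lmap_tendsto (pack α h)) ht

lemma approx_tendsto (x : ℝ) : Tendsto (fun n => ((approx x n : ℝ))) atTop (𝓝 x) :=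
  (glue_tendsto (approx x) 0 x).congr (fun n => by unfold glue; split <;> rfl)

lemma Lmap_surjective : Function.Surjective Lmap := by
  intro x
  exact ⟨pack (approx x) (rfc_approx x), Lmap_pack (rfc_approx x) (approx_tendsto x)⟩

lemma Lmap_continuous : Continuous Lmap := by
  rw [continuous_iff_continuousAt]
  intro α
  rw [ContinuousAt, Metric.tendsto_nhds]
  intro ε hε
  obtain ⟨m, hm⟩ : ∃ m : ℕ, (1/2 : ℝ)^m < ε := by
    obtain ⟨N, hN⟩ := (Metric.tendsto_atTop.1 half_pow_tendsto) ε hε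
    refine ⟨N, ?_⟩
    have := hN N le_rfl
    rw [Real.dist_eq, sub_zero, abs_of_nonneg (by positivity)] at this
    exact this
  have hopen : IsOpen {β : CauchySpace | β.1 m = α.1 m} := by
    have : {β : CauchySpace | β.1 m = α.1 m} =
        ((fun β : CauchySpace => β.1 m) ⁻¹' {α.1 m}) := rfl
    rw [this]
    exact (isOpen_discrete _).preimage ((continuous_apply m).comp continuous_subtype_val)
  filter_upwards [hopen.mem_nhds rfl] with β hβ
  have h1 := Lmap_dist α m
  have h2 := Lmap_dist β m
  rw [Real.dist_eq]
  have hβ' : ((β.1 m).toRat : ℝ) = ((α.1 m).toRat : ℝ) := by rw [hβ]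
  have e : (1/2:ℝ)^m = (1/2)^(m+1) + (1/2)^(m+1) := by rw [pow_succ]; ring
  have habs : |Lmap β - Lmap α| ≤ |Lmap β - ((β.1 m).toRat : ℝ)| + |((α.1 m).toRat : ℝ) - Lmap α| := by
    rw [hβ']
    calc |Lmap β - Lmap α| = |(Lmap β - ((α.1 m).toRat : ℝ)) + (((α.1 m).toRat : ℝ) - Lmap α)| := by ring_nf
      _ ≤ _ := abs_add_le _ _
  rw [abs_sub_comm (((α.1 m).toRat : ℝ))] at habs
  have h2' := Lmap_dist α m
  rw [abs_sub_comm] at h1 h2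
  calc |Lmap β - Lmap α| ≤ _ := habs
    _ < ε := by rw [abs_sub_comm (Lmap β), abs_sub_comm (((α.1 m).toRat:ℝ))] at *; linarith [h1, h2, hm, e]

lemma Lmap_quotient : Topology.IsQuotientMap Lmap := by
  simp_rw [Topology.isQuotientMap_iff, Topology.isCoinducing_iff, and_comm, iff_comm]
  refine ⟨Lmap_surjective, fun s => ⟨fun hs => hs.preimage Lmap_continuous, fun hs => ?_⟩⟩
  rw [Metric.isOpen_iff]
  intro x hx
  set A : CauchySpace := pack (approx x) (rfc_approx x) with hA
  have hAx : Lmap A = x := Lmap_pack _ (approx_tendsto x)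
  have hAU : A ∈ Lmap ⁻¹' s := by simp only [Set.mem_preimage, hAx]; exact hx
  obtain ⟨V, hV, hVe⟩ :=
    (isOpen_induced_iff (f := (Subtype.val : CauchySpace → ℕ → Qd))).1 hs
  have hAV : A.1 ∈ V := by
    have : A ∈ Subtype.val ⁻¹' V := hVe ▸ hAU
    exact this
  obtain ⟨I, u, hIu, hpi⟩ := isOpen_pi_iff.1 hV A.1 hAV
  set m := I.sup id with hmdef
  have hm : ∀ i ∈ I, i ≤ m := fun i hi => Finset.le_sup (f := id) hi
  refine ⟨(1/2)^(m+3), by positivity, fun y hy => ?_⟩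
  have hyd : |y - x| < (1/2:ℝ)^(m+3) := by
    rw [← Real.dist_eq]; exact Metric.mem_ball.1 hy
  have hβrfc : RFC (glue (approx x) m y) := by
    refine glue_rfc _ m y (fun i j hij hjm => rfc_approx x i j hij) (fun i hi => ?_)
    have h1 := approx_spec x i
    have h2 : (1/2:ℝ)^(m+3) ≤ (1/2)^(i+3) := half_pow_le (by omega)
    have hp : (0:ℝ) < (1/2)^(i+3) := by positivity
    have habs : |(approx x i : ℝ) - y| ≤ |x - (approx x i : ℝ)| + |y - x| := by
      calc |(approx x i : ℝ) - y| = |-(x - (approx x i : ℝ)) + -(y - x)| := by ring_nf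
        _ ≤ |-(x - (approx x i : ℝ))| + |-(y - x)| := abs_add_le _ _
        _ = _ := by rw [abs_neg, abs_neg]
    linarith
  set β : CauchySpace := pack _ hβrfc with hβ
  have hβy : Lmap β = y := Lmap_pack _ (glue_tendsto _ m y)
  have hβV : β.1 ∈ V := by
    apply hpi
    intro i hi
    have e : glue (approx x) m y i = approx x i := glue_prefix _ _ _ (hm i hi)
    show glue (approx x) m y i ∈ u i
    rw [e]
    exact (hIu i hi).2
  have hβs : β ∈ Lmap ⁻¹' s := by
    rw [← hVe]
    exact hβV
  rw [← hβy]
  exact hβs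

end Stmt4Aux

theorem stmt_4 :
    ∃ L : CauchySpace → ℝ,
      (∀ α : CauchySpace,
        Filter.Tendsto (fun n => ((α.1 n).toRat : ℝ)) Filter.atTop (nhds (L α))) ∧
      Continuous L ∧ Function.Surjective L ∧ Topology.IsQuotientMap L :=
  ⟨Stmt4Aux.Lmap, Stmt4Aux.Lmap_tendsto, Stmt4Aux.Lmap_continuous,
    Stmt4Aux.Lmap_surjective, Stmt4Aux.Lmap_quotient⟩
end

section
/- Let C ⊆ (ℕ → ℚ) be the space of fast converging Cauchy sequences (subspace of the product ∏_{n : ℕ} ℚ with ℚ discrete), and let L : C → ℝ be the limit map L(α) = lim α. Suppose F : C → C is continuous and Cauchy preserving, i.e. whenever L(α) = L(β) then L(F α) = L(F β). Then there is a unique function f : ℝ → ℝ with f(L α) = L(F α) for all α ∈ C, and this induced function f is continuous. (In particular, every TTE-computable function over ℝ is continuous.) -/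
noncomputable section Aux

open Filter Topology

private lemma half_pow_pos (n : ℕ) : (0:ℝ) < (1/2)^n := by positivity

private lemma half_pow_mono {m n : ℕ} (h : m ≤ n) : ((1:ℝ)/2)^n ≤ (1/2)^m :=
  pow_le_pow_of_le_one (by norm_num) (by norm_num) h

private lemma half_pow_tendsto (k : ℕ) :
    Filter.Tendsto (fun n : ℕ => ((1:ℝ)/2)^(n+k)) Filter.atTop (nhds 0) :=
  (tendsto_pow_atTop_nhds_zero_of_lt_one (by norm_num) (by norm_num)).comp
    (Filter.tendsto_add_atTop_nat k)

private lemma exists_near (x : ℝ) (n : ℕ) : ∃ q : ℚ, |(q:ℝ) - x| < (1/2)^(n+2) := by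
  obtain ⟨q, hq⟩ := exists_rat_near x (half_pow_pos (n+2))
  exact ⟨q, by rw [abs_sub_comm]; exact hq⟩

private def repSeq (x : ℝ) (n : ℕ) : Qd := Classical.choose (exists_near x n)

private lemma repSeq_spec (x : ℝ) (n : ℕ) :
    |((repSeq x n).toRat : ℝ) - x| < (1/2)^(n+2) :=
  Classical.choose_spec (exists_near x n)

private lemma fastCauchy_of_real {α : ℕ → Qd}
    (h : ∀ m n : ℕ, m < n → |((α m).toRat : ℝ) - ((α n).toRat : ℝ)| < (1/2)^(m+1)) :
    FastCauchy α := by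
  intro m n hmn
  have h' := h m n hmn
  show |(α m).toRat - (α n).toRat| < (1/2 : ℚ)^(m+1)
  have : (|(α m).toRat - (α n).toRat| : ℝ) < (((1/2:ℚ)^(m+1) : ℚ) : ℝ) := by
    push_cast
    exact h'
  exact_mod_cast this

private lemma fastCauchy_real {α : ℕ → Qd} (h : FastCauchy α) (m n : ℕ) (hmn : m < n) :
    |((α m).toRat : ℝ) - ((α n).toRat : ℝ)| < (1/2)^(m+1) := by
  have h' : |(α m).toRat - (α n).toRat| < (1/2 : ℚ)^(m+1) := h m n hmn
  have : (|(α m).toRat - (α n).toRat| : ℝ) < (((1/2:ℚ)^(m+1) : ℚ) : ℝ) := by exact_mod_cast h'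
  calc |((α m).toRat : ℝ) - ((α n).toRat : ℝ)|
      = (|(α m).toRat - (α n).toRat| : ℝ) := by norm_cast
    _ < (((1/2:ℚ)^(m+1) : ℚ) : ℝ) := this
    _ = (1/2)^(m+1) := by push_cast; ring_nf

private lemma limit_bound (α : CauchySpace) {l : ℝ}
    (hl : Filter.Tendsto (fun n => ((α.1 n).toRat : ℝ)) Filter.atTop (nhds l)) (m : ℕ) :
    |((α.1 m).toRat : ℝ) - l| ≤ (1/2)^(m+1) := by
  have htd : Filter.Tendsto (fun n => |((α.1 m).toRat : ℝ) - ((α.1 n).toRat : ℝ)|)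
      Filter.atTop (nhds |((α.1 m).toRat : ℝ) - l|) :=
    (tendsto_const_nhds.sub hl).abs
  refine le_of_tendsto htd ?_
  filter_upwards [Filter.eventually_gt_atTop m] with n hn
  exact (fastCauchy_real α.2 m n hn).le

private def rep (x : ℝ) : CauchySpace :=
  ⟨fun n => repSeq x n, fastCauchy_of_real (by
    intro m n hmn
    have h1 := repSeq_spec x m
    have h2 := repSeq_spec x n
    have h3 : ((1:ℝ)/2)^(n+2) ≤ (1/2)^(m+3) := half_pow_mono (by omega)
    have h4 : ((1:ℝ)/2)^(m+2) = (1/2)^(m+1) * (1/2) := pow_succ _ _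
    have h5 : ((1:ℝ)/2)^(m+3) = (1/2)^(m+2) * (1/2) := pow_succ _ _
    have := abs_sub_le ((repSeq x m).toRat : ℝ) x ((repSeq x n).toRat : ℝ)
    have habs : |x - ((repSeq x n).toRat : ℝ)| = |((repSeq x n).toRat : ℝ) - x| :=
      abs_sub_comm _ _
    nlinarith [half_pow_pos (m+1)])⟩

private lemma rep_tendsto (x : ℝ) :
    Filter.Tendsto (fun n => (((rep x).1 n).toRat : ℝ)) Filter.atTop (nhds x) := by
  rw [tendsto_iff_dist_tendsto_zero]
  refine squeeze_zero (fun n => dist_nonneg) (fun n => ?_) (half_pow_tendsto 2)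
  rw [Real.dist_eq]
  exact (repSeq_spec x n).le

private lemma key (F : CauchySpace → CauchySpace) (hF : Continuous F)
    (α : CauchySpace) (M : ℕ) :
    ∃ N : ℕ, ∀ β : CauchySpace, (∀ n, n ≤ N → β.1 n = α.1 n) →
      ∀ n, n ≤ M → (F β).1 n = (F α).1 n := by
  have hcont : ∀ n : ℕ, Continuous fun β : CauchySpace => (F β).1 n :=
    fun n => (continuous_apply n).comp (continuous_subtype_val.comp hF)
  set U : Set CauchySpace :=
    ⋂ n : Fin (M+1), {β | (F β).1 n.1 = (F α).1 n.1} with hUdef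
  have hUopen : IsOpen U :=
    isOpen_iInter_of_finite fun n =>
      (isOpen_discrete {( F α).1 n.1}).preimage (hcont n.1)
  have hUmem : α ∈ U := Set.mem_iInter.2 fun n => rfl
  have hUnhds : U ∈ nhds α := hUopen.mem_nhds hUmem
  have hind : IsInducing (Subtype.val : CauchySpace → (ℕ → Qd)) := ⟨rfl⟩
  have h2 : U ∈ (nhds α.1).comap Subtype.val := by
    exact (hind.nhds_eq_comap α) ▸ hUnhds
  obtain ⟨s, hs, hsub⟩ := Filter.mem_comap.1 h2
  rw [nhds_pi, Filter.mem_pi] at hs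
  obtain ⟨I, hIfin, t, ht, hIt⟩ := hs
  obtain ⟨N, hNb⟩ : ∃ N : ℕ, ∀ i ∈ I, i ≤ N := by
    obtain ⟨N, hN⟩ := hIfin.bddAbove
    exact ⟨N, fun i hi => hN hi⟩
  refine ⟨N, fun β hβ n hn => ?_⟩
  have hmem : β.1 ∈ I.pi t := by
    intro i hi
    rw [hβ i (hNb i hi)]
    exact mem_nhds_discrete.1 (ht i)
  have hβU : β ∈ U := hsub (hIt hmem)
  exact Set.mem_iInter.1 hβU ⟨n, Nat.lt_succ_of_le hn⟩

end Aux

theorem stmt_5 (L : CauchySpace → ℝ)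
    (hL : ∀ α : CauchySpace,
      Filter.Tendsto (fun n => ((α.1 n).toRat : ℝ)) Filter.atTop (nhds (L α)))
    (F : CauchySpace → CauchySpace) (hF : Continuous F)
    (hpres : ∀ α β : CauchySpace, L α = L β → L (F α) = L (F β)) :
    ∃ f : ℝ → ℝ, (∀ α : CauchySpace, f (L α) = L (F α)) ∧
      (∀ g : ℝ → ℝ, (∀ α : CauchySpace, g (L α) = L (F α)) → g = f) ∧
      Continuous f := by
  classical
  have hLrep : ∀ x : ℝ, L (rep x) = x :=
    fun x => tendsto_nhds_unique (hL (rep x)) (rep_tendsto x)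
  refine ⟨fun x => L (F (rep x)), ?_, ?_, ?_⟩
  · intro α
    exact hpres _ _ (hLrep (L α))
  · intro g hg
    funext x
    have := hg (rep x)
    rwa [hLrep] at this
  · rw [Metric.continuous_iff]
    intro x ε hε
    obtain ⟨M, hM⟩ : ∃ M : ℕ, ((1:ℝ)/2)^M < ε :=
      exists_pow_lt_of_lt_one hε (by norm_num)
    obtain ⟨N, hN⟩ := key F hF (rep x) M
    refine ⟨(1/2)^(N+4), half_pow_pos _, fun y hy => ?_⟩
    rw [Real.dist_eq] at hy
    -- construct a representation of y agreeing with rep x up to N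
    have hβfast : FastCauchy (fun n => if n ≤ N then (rep x).1 n else repSeq y n) := by
      apply fastCauchy_of_real
      intro m n hmn
      by_cases hm : m ≤ N
      · by_cases hn : n ≤ N
        · simpa [hm, hn] using fastCauchy_real (rep x).2 m n hmn
        · -- m ≤ N < n
          simp only [hm, hn, if_true, if_false]
          have h1 : |(((rep x).1 m).toRat : ℝ) - x| < (1/2)^(m+2) := repSeq_spec x m
          have h2 := repSeq_spec y n
          have h3 : ((1:ℝ)/2)^(n+2) ≤ (1/2)^(m+3) := half_pow_mono (by omega)
          have h4 : ((1:ℝ)/2)^(N+4) ≤ (1/2)^(m+4) := half_pow_mono (by omega)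
          have t1 := abs_sub_le (((rep x).1 m).toRat : ℝ) x (((repSeq y n).toRat : ℝ))
          have t2 := abs_sub_le x y (((repSeq y n).toRat : ℝ))
          have habs1 : |y - ((repSeq y n).toRat : ℝ)| = |((repSeq y n).toRat : ℝ) - y| :=
            abs_sub_comm _ _
          have habs2 : |x - y| = |y - x| := abs_sub_comm _ _
          have e2 : ((1:ℝ)/2)^(m+2) = (1/2)^(m+1) * (1/2) := pow_succ _ _
          have e3 : ((1:ℝ)/2)^(m+3) = (1/2)^(m+2) * (1/2) := pow_succ _ _
          have e4 : ((1:ℝ)/2)^(m+4) = (1/2)^(m+3) * (1/2) := pow_succ _ _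
          nlinarith [half_pow_pos (m+1)]
      · -- N < m < n
        have hn : ¬ n ≤ N := by omega
        simp only [hm, hn, if_false]
        exact fastCauchy_real (rep y).2 m n hmn
    set β : CauchySpace := ⟨fun n => if n ≤ N then (rep x).1 n else repSeq y n, hβfast⟩
      with hβdef
    have hLβ : L β = y := by
      refine tendsto_nhds_unique (hL β) ?_
      have : Filter.Tendsto (fun n => (((rep y).1 n).toRat : ℝ)) Filter.atTop (nhds y) :=
        rep_tendsto y
      refine this.congr' ?_
      filter_upwards [Filter.eventually_gt_atTop N] with n hn
      simp [hβdef, Nat.not_le_of_lt hn, rep, repSeq]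
    have hagree : ∀ n, n ≤ N → β.1 n = (rep x).1 n := fun n hn => if_pos hn
    have hFc := hN β hagree M le_rfl
    have hfy : L (F (rep y)) = L (F β) := hpres _ _ (by rw [hLrep, hLβ])
    rw [Real.dist_eq]
    show |L (F (rep y)) - L (F (rep x))| < ε
    rw [hfy]
    have b1 := limit_bound (F β) (hL (F β)) M
    have b2 := limit_bound (F (rep x)) (hL (F (rep x))) M
    have heq : (((F β).1 M).toRat : ℝ) = (((F (rep x)).1 M).toRat : ℝ) := by rw [hFc]
    have u1 : |L (F β) - (((F β).1 M).toRat : ℝ)| ≤ (1/2)^(M+1) :=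
      (abs_sub_comm _ _).le.trans b1
    have u2 : |(((F β).1 M).toRat : ℝ) - L (F (rep x))| ≤ (1/2)^(M+1) := by
      rw [heq]; exact b2
    have tri := abs_sub_le (L (F β)) ((((F β).1 M).toRat : ℝ)) (L (F (rep x)))
    have epow : ((1:ℝ)/2)^(M+1) = (1/2)^M * (1/2) := pow_succ _ _
    have : |L (F β) - L (F (rep x))| < ε := by nlinarith [half_pow_pos M]
    exact this
end

section
/- There is no computable function g : ℕ → ℕ → Bool such that for every partial recursive code c : Nat.Partrec.Code, the sequence s ↦ g (Encodable.encode c) s is eventually constant, with eventual value true if and only if the set {n : ℕ | (c.eval n).Dom} (the domain of the partial function coded by c) is infinite. (Equivalently: the index set Inf = {e : W_e is infinite} is not limit computable, i.e. not Turing reducible to the halting problem ∅'.) -/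
/-- The index set `Inf = {e : W_e is infinite}` is not limit computable: there is no
computable `g : ℕ → ℕ → Bool` such that for every code `c`, the sequence
`s ↦ g (encode c) s` is eventually constant, with eventual value `true` iff the domain
of the partial function coded by `c` is infinite. -/
theorem stmt_7 :
    ¬ ∃ g : ℕ → ℕ → Bool, Computable₂ g ∧
      ∀ c : Nat.Partrec.Code, ∃ b : Bool,
        (∃ N : ℕ, ∀ s : ℕ, N ≤ s → g (Encodable.encode c) s = b) ∧
        (b = true ↔ {n : ℕ | (c.eval n).Dom}.Infinite) := by
  rintro ⟨g, hg, hspec⟩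
  set f : Nat.Partrec.Code → ℕ →. ℕ := fun c n =>
    Nat.rfind (fun s => Part.some (!(g (Encodable.encode c) (n + s)))) with hfdef
  have hf : Partrec₂ f := by
    apply Partrec.rfind
    apply Computable₂.partrec₂
    exact ((Primrec.not.to_comp.comp
      (hg.comp ((Computable.encode.comp Computable.fst).comp Computable.fst)
        (Primrec.nat_add.to_comp.comp (Computable.snd.comp Computable.fst)
          Computable.snd))).to₂ :
      Computable₂ fun (p : Nat.Partrec.Code × ℕ) (s : ℕ) => !(g (Encodable.encode p.1) (p.2 + s)))
  obtain ⟨c, hc⟩ := Nat.Partrec.Code.fixed_point₂ hf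
  obtain ⟨b, ⟨N, hN⟩, hb⟩ := hspec c
  have hdom : ∀ n, (c.eval n).Dom ↔ ∃ s, g (Encodable.encode c) (n + s) = false := by
    intro n
    rw [hc]
    simp only [hfdef, Nat.rfind_dom]
    constructor
    · rintro ⟨s, hs, -⟩
      exact ⟨s, by simpa using hs⟩
    · rintro ⟨s, hs⟩
      exact ⟨s, by simpa using hs, fun {m} _ => trivial⟩
  cases b with
  | true =>
    have hinf : {n : ℕ | (c.eval n).Dom}.Infinite := hb.mp rfl
    have : {n : ℕ | (c.eval n).Dom} ⊆ Set.Iio N := by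
      intro n hn
      by_contra h
      simp only [Set.mem_Iio, not_lt] at h
      obtain ⟨s, hs⟩ := (hdom n).mp hn
      have := hN (n + s) (le_trans (by simpa using h) (Nat.le_add_right n s))
      rw [hs] at this
      exact Bool.false_ne_true this
    exact hinf ((Set.finite_Iio N).subset this)
  | false =>
    have hninf : ¬ {n : ℕ | (c.eval n).Dom}.Infinite := fun h => by simpa using hb.mpr h
    apply hninf
    have : {n : ℕ | (c.eval n).Dom} = Set.univ := by
      ext n
      simp only [Set.mem_setOf_eq, Set.mem_univ, iff_true]
      exact (hdom n).mpr ⟨N, hN (n + N) (Nat.le_add_left N n)⟩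
    rw [this]
    exact Set.infinite_univ
end

section
/- If T : List Bool → Bool is computable, closed under prefixes (if T τ = true and σ is a prefix of τ then T σ = true), and has exactly one infinite path f : ℕ → Bool (i.e. f is the unique function such that T [f 0, …, f (n−1)] = true for all n), then f is computable. -/
namespace Stmt9Aux

/-- Decode `k` into a list of `L` bits (LSB first). -/
def bitsL : ℕ → ℕ → List Bool
  | 0, _ => []
  | L+1, k => k.bodd :: bitsL L k.div2

/-- Encode a list of bits into a number. -/
def enc : List Bool → ℕ
  | [] => 0
  | b :: l => 2 * enc l + cond b 1 0

theorem bitsL_length : ∀ (L k : ℕ), (bitsL L k).length = L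
  | 0, _ => rfl
  | L+1, k => by simp [bitsL, bitsL_length L]

theorem bitsL_enc : ∀ l : List Bool, bitsL l.length (enc l) = l
  | [] => rfl
  | b :: l => by
    have h1 : (2 * enc l + cond b 1 0).bodd = b := by
      cases b <;> simp [Nat.bodd_add, Nat.bodd_mul]
    have h2 : (2 * enc l + cond b 1 0).div2 = enc l := by
      cases b <;> simp only [Nat.div2_val, Bool.cond_true, Bool.cond_false] <;> omega
    simp [bitsL, enc, h1, h2, bitsL_enc l]

theorem enc_lt : ∀ l : List Bool, enc l < 2 ^ l.length
  | [] => by simp [enc]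
  | b :: l => by
    have := enc_lt l
    cases b <;> simp [enc, pow_succ] <;> omega

def conjN (Q : ℕ → Bool) : ℕ → Bool
  | 0 => true
  | m+1 => conjN Q m && Q m

theorem conjN_eq_true {Q : ℕ → Bool} {m : ℕ} : conjN Q m = true ↔ ∀ k < m, Q k = true := by
  induction m with
  | zero => simp [conjN]
  | succ m ih =>
    simp only [conjN, Bool.and_eq_true, ih]
    constructor
    · rintro ⟨h1, h2⟩ k hk
      rcases Nat.lt_succ_iff_lt_or_eq.1 hk with h | rfl
      exacts [h1 _ h, h2]
    · intro h
      exact ⟨fun k hk => h k (hk.trans (Nat.lt_succ_self m)), h m (Nat.lt_succ_self m)⟩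

theorem bitsL_snoc : ∀ (L k : ℕ), bitsL (L+1) k = bitsL L k ++ [(Nat.div2^[L] k).bodd]
  | 0, k => rfl
  | L+1, k => by
    show k.bodd :: bitsL (L+1) k.div2 = (k.bodd :: bitsL L k.div2) ++ _
    rw [bitsL_snoc L k.div2, Function.iterate_succ_apply]
    simp

theorem rec_bits (L k : ℕ) :
    (Nat.rec (motive := fun _ => ℕ × List Bool) (k, ([] : List Bool))
      (fun _ IH => (IH.1.div2, IH.2 ++ [IH.1.bodd])) L) = (Nat.div2^[L] k, bitsL L k) := by
  induction L with
  | zero => rfl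
  | succ L ih =>
    simp only [ih, Function.iterate_succ_apply', bitsL_snoc]

theorem bitsL_computable : Computable₂ bitsL := by
  have h := Computable.nat_rec (f := fun p : ℕ × ℕ => p.1)
      (g := fun p : ℕ × ℕ => (p.2, ([] : List Bool)))
      (h := fun (_ : ℕ × ℕ) (s : ℕ × (ℕ × List Bool)) => (s.2.1.div2, s.2.2 ++ [s.2.1.bodd]))
      Computable.fst (Computable.snd.pair (Computable.const []))
      (((Computable.nat_div2.comp (Computable.fst.comp (Computable.snd.comp Computable.snd))).pair
        (Computable.list_concat.comp (Computable.snd.comp (Computable.snd.comp Computable.snd))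
          (Computable.nat_bodd.comp (Computable.fst.comp (Computable.snd.comp Computable.snd))))).to₂)
  exact (Computable.snd.comp h).of_eq fun p => by rw [rec_bits]

theorem conjN_computable {α : Type*} [Primcodable α] {Q : α → ℕ → Bool} {M : α → ℕ}
    (hQ : Computable₂ Q) (hM : Computable M) : Computable fun a => conjN (Q a) (M a) := by
  have h := Computable.nat_rec (f := M) (g := fun _ : α => true)
      (h := fun (a : α) (s : ℕ × Bool) => s.2 && Q a s.1) hM (Computable.const true)
      ((Computable.cond (Computable.snd.comp Computable.snd)
        (hQ.comp Computable.fst (Computable.fst.comp Computable.snd))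
        (Computable.const false)).of_eq
          (g := fun p : α × ℕ × Bool => p.2.2 && Q p.1 p.2.1)
          (fun p => by cases h : p.2.2 <;> simp [h])).to₂
  exact h.of_eq fun a => by
    generalize M a = m
    induction m with
    | zero => rfl
    | succ m ih =>
      show ((Nat.rec true (fun y IH => IH && Q a y) m : Bool) && Q a m) = (conjN (Q a) m && Q a m)
      rw [ih]

theorem pow2_computable : Computable (fun m : ℕ => 2 ^ m) := by
  have h := Computable.nat_rec (f := @id ℕ) (g := fun _ : ℕ => 1)
      (h := fun (_ : ℕ) (s : ℕ × ℕ) => s.2 + s.2) Computable.id (Computable.const 1)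
      ((Primrec.nat_add.comp (Primrec.snd.comp Primrec.snd) (Primrec.snd.comp Primrec.snd)).to_comp).to₂
  exact h.of_eq fun m => by
    induction m with
    | zero => rfl
    | succ m ih => simp only [id] at ih ⊢; rw [pow_succ]; simp [ih]; omega

def chk (T : List Bool → Bool) (n N : ℕ) (b : Bool) : Bool :=
  conjN (fun k => !(T (bitsL (n+N+1) k)) || ((bitsL (n+N+1) k).getD n false == b)) (2 ^ (n+N+1))

def good (T : List Bool → Bool) (n N : ℕ) : Option Bool :=
  cond (chk T n N true) (cond (chk T n N false) none (some true))
    (cond (chk T n N false) (some false) none)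

theorem chk_iff {T : List Bool → Bool} {n N : ℕ} {b : Bool} : chk T n N b = true ↔
    ∀ ρ : List Bool, ρ.length = n+N+1 → T ρ = true → ρ.getD n false = b := by
  rw [chk, conjN_eq_true]
  constructor
  · intro h ρ hlen hT
    have hk := h (enc ρ) (by simpa [hlen] using enc_lt ρ)
    rw [show (n+N+1) = ρ.length from hlen.symm, bitsL_enc] at hk
    simp only [Bool.or_eq_true, Bool.not_eq_true', beq_iff_eq] at hk
    rcases hk with h' | h'
    · rw [hT] at h'; cases h'
    · exact h'
  · intro h k _
    simp only [Bool.or_eq_true, Bool.not_eq_true', beq_iff_eq]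
    by_cases hT : T (bitsL (n+N+1) k) = true
    · exact Or.inr (h _ (bitsL_length _ _) hT)
    · exact Or.inl (by simpa using hT)

theorem good_eq_some_iff {T : List Bool → Bool} {n N : ℕ} {b : Bool} :
    good T n N = some b ↔ chk T n N b = true ∧ chk T n N (!b) = false := by
  unfold good
  cases h1 : chk T n N true <;> cases h2 : chk T n N false <;> cases b <;> simp [h1, h2]

def pre (f : ℕ → Bool) (m : ℕ) : List Bool := List.ofFn fun i : Fin m => f i

theorem pre_length (f : ℕ → Bool) (m : ℕ) : (pre f m).length = m := List.length_ofFn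

theorem pre_succ (f : ℕ → Bool) (m : ℕ) : pre f (m+1) = pre f m ++ [f m] := by
  simp only [pre]
  rw [List.ofFn_succ']
  simp [Function.comp, List.concat_eq_append]

theorem pre_prefix (f : ℕ → Bool) {m m' : ℕ} (h : m ≤ m') : pre f m <+: pre f m' := by
  induction m' with
  | zero => interval_cases m; exact List.nil_prefix
  | succ m' ih =>
    rcases eq_or_lt_of_le h with rfl | h'
    · exact List.prefix_refl _
    · exact (ih (Nat.lt_succ_iff.1 h')).trans ⟨[f m'], (pre_succ f m').symm⟩

theorem getD_append {l₁ l₂ : List Bool} {n : ℕ} (h : n < l₁.length) (d : Bool) :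
    (l₁ ++ l₂).getD n d = l₁.getD n d := by
  simp [List.getD_eq_getElem?_getD, List.getElem?_append, h]

theorem getD_take {l : List Bool} {n L : ℕ} (h : n < L) (d : Bool) :
    (l.take L).getD n d = l.getD n d := by
  simp [List.getD_eq_getElem?_getD, List.getElem?_take, h]

theorem pre_getD (f : ℕ → Bool) (n m : ℕ) (h : n < m) : (pre f m).getD n false = f n := by
  rw [List.getD_eq_getElem _ _ (by simpa [pre_length])]
  simp [pre, List.getElem_ofFn]

theorem getD_of_prefix {f : ℕ → Bool} {n : ℕ} {ρ : List Bool} (h : pre f (n+1) <+: ρ) :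
    ρ.getD n false = f n := by
  obtain ⟨t, rfl⟩ := h
  rw [getD_append (by simp [pre_length]), pre_getD f n (n+1) (Nat.lt_succ_self n)]

theorem ext_bit (σ ρ : List Bool) (hp : σ <+: ρ) (hl : σ.length < ρ.length) :
    σ ++ [ρ.getD σ.length false] <+: ρ := by
  obtain ⟨t, rfl⟩ := hp
  cases t with
  | nil => simp at hl
  | cons c t' =>
    have : (σ ++ c :: t').getD σ.length false = c := by
      rw [List.getD_eq_getElem?_getD, List.getElem?_append_right (le_refl _)]
      simp
    rw [this]
    exact ⟨t', by simp⟩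

theorem konig (T : List Bool → Bool)
    (hpref : ∀ σ τ : List Bool, T τ = true → σ <+: τ → T σ = true)
    (f : ℕ → Bool)
    (huniq : ∀ g : ℕ → Bool, (∀ n : ℕ, T (List.ofFn fun i : Fin n => g i) = true) → g = f)
    (n : ℕ) :
    ∃ N₀ : ℕ, ∀ ρ : List Bool, T ρ = true → N₀ ≤ ρ.length → pre f (n+1) <+: ρ := by
  classical
  by_contra H
  push_neg at H
  set E : List Bool → Prop := fun σ =>
    ∀ N, ∃ ρ, T ρ = true ∧ N ≤ ρ.length ∧ ¬ pre f (n+1) <+: ρ ∧ σ <+: ρ with hE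
  have hE0 : E [] := by
    intro N
    obtain ⟨ρ, h1, h2, h3⟩ := H N
    exact ⟨ρ, h1, h2, h3, List.nil_prefix⟩
  have step : ∀ σ, E σ → ∃ b, E (σ ++ [b]) := by
    intro σ hEσ
    by_contra hn
    push_neg at hn
    have h1 := hn true
    have h2 := hn false
    simp only [hE] at h1 h2
    push_neg at h1 h2
    obtain ⟨N₁, h1⟩ := h1
    obtain ⟨N₂, h2⟩ := h2
    obtain ⟨ρ, hT', hlen, hbad, hpfx⟩ := hEσ (max (max N₁ N₂) (σ.length + 1))
    have hσl : σ.length < ρ.length :=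
      lt_of_lt_of_le (Nat.lt_succ_of_le (le_refl _)) (le_trans (le_max_right _ _) hlen)
    have hN₁ : N₁ ≤ ρ.length := le_trans (le_trans (le_max_left _ _) (le_max_left _ _)) hlen
    have hN₂ : N₂ ≤ ρ.length := le_trans (le_trans (le_max_right _ _) (le_max_left _ _)) hlen
    have hb := ext_bit σ ρ hpfx hσl
    cases hgb : ρ.getD σ.length false with
    | true => exact h1 ρ hT' hN₁ hbad (hgb ▸ hb)
    | false => exact h2 ρ hT' hN₂ hbad (hgb ▸ hb)
  choose bit hbit using step
  let C : ℕ → {σ : List Bool // E σ} := fun k =>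
    Nat.rec ⟨[], hE0⟩ (fun _ p => ⟨p.1 ++ [bit p.1 p.2], hbit p.1 p.2⟩) k
  let g : ℕ → Bool := fun k => bit (C k).1 (C k).2
  have hCsucc : ∀ k, (C (k+1)).1 = (C k).1 ++ [g k] := fun k => rfl
  have hCofFn : ∀ k, (C k).1 = pre g k := by
    intro k
    induction k with
    | zero => rfl
    | succ k ih => rw [hCsucc, ih, pre_succ]
  have hgpath : ∀ k, T (List.ofFn fun i : Fin k => g i) = true := by
    intro k
    obtain ⟨ρ, hT', _, _, hpfx⟩ := (C k).2 0
    refine hpref _ ρ hT' ?_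
    rw [show (List.ofFn fun i : Fin k => g i) = (C k).1 from (hCofFn k).symm]
    exact hpfx
  have hgf := huniq g hgpath
  obtain ⟨ρ, hT', _, hbad, hpfx⟩ := (C (n+1)).2 0
  apply hbad
  have hc : (C (n+1)).1 = pre f (n+1) := by rw [hCofFn (n+1), hgf]
  rwa [hc] at hpfx

end Stmt9Aux

set_option maxHeartbeats 1000000 in
open Stmt9Aux in
/-- The unique infinite path of a computable binary tree is computable. -/
theorem stmt_9 (T : List Bool → Bool) (hT : Computable T)
    (hpref : ∀ σ τ : List Bool, T τ = true → σ <+: τ → T σ = true)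
    (f : ℕ → Bool)
    (hf : ∀ n : ℕ, T (List.ofFn fun i : Fin n => f i) = true)
    (huniq : ∀ g : ℕ → Bool, (∀ n : ℕ, T (List.ofFn fun i : Fin n => g i) = true) → g = f) :
    Computable f := by
  classical
  -- Computability of the search function `good T`
  have hL : Computable (fun a : (ℕ × ℕ) × Bool => a.1.1 + a.1.2 + 1) :=
    (Primrec.succ.comp (Primrec.nat_add.comp (Primrec.fst.comp Primrec.fst)
      (Primrec.snd.comp Primrec.fst))).to_comp
  have hbits : Computable (fun p : ((ℕ × ℕ) × Bool) × ℕ =>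
      bitsL (p.1.1.1 + p.1.1.2 + 1) p.2) :=
    bitsL_computable.comp (hL.comp Computable.fst) Computable.snd
  have hTb : Computable (fun p : ((ℕ × ℕ) × Bool) × ℕ =>
      T (bitsL (p.1.1.1 + p.1.1.2 + 1) p.2)) := hT.comp hbits
  have hnot : Computable (fun p : ((ℕ × ℕ) × Bool) × ℕ =>
      !(T (bitsL (p.1.1.1 + p.1.1.2 + 1) p.2))) := (Primrec.dom_bool (!·)).to_comp.comp hTb
  have hgetD : Computable (fun p : ((ℕ × ℕ) × Bool) × ℕ =>
      (bitsL (p.1.1.1 + p.1.1.2 + 1) p.2).getD p.1.1.1 false) := by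
    have hget? : Computable (fun p : ((ℕ × ℕ) × Bool) × ℕ =>
        (bitsL (p.1.1.1 + p.1.1.2 + 1) p.2)[p.1.1.1]?) :=
      Computable.list_getElem?.comp hbits (Computable.fst.comp (Computable.fst.comp Computable.fst))
    exact (Computable.option_getD hget? (Computable.const false)).of_eq fun p => by
      simp [List.getD_eq_getElem?_getD]
  have hbeq : Computable (fun p : ((ℕ × ℕ) × Bool) × ℕ =>
      ((bitsL (p.1.1.1 + p.1.1.2 + 1) p.2).getD p.1.1.1 false == p.1.2)) :=
    (Primrec.dom_bool₂ (· == ·)).to_comp.comp hgetD (Computable.snd.comp Computable.fst)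
  have hor : Computable (fun p : ((ℕ × ℕ) × Bool) × ℕ =>
      (!(T (bitsL (p.1.1.1 + p.1.1.2 + 1) p.2)) ||
        ((bitsL (p.1.1.1 + p.1.1.2 + 1) p.2).getD p.1.1.1 false == p.1.2))) :=
    (Primrec.dom_bool₂ (· || ·)).to_comp.comp hnot hbeq
  have hM : Computable (fun a : (ℕ × ℕ) × Bool => 2 ^ (a.1.1 + a.1.2 + 1)) :=
    pow2_computable.comp hL
  have hQ : Computable₂ (fun (a : (ℕ × ℕ) × Bool) (k : ℕ) =>
      (!(T (bitsL (a.1.1 + a.1.2 + 1) k)) ||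
        ((bitsL (a.1.1 + a.1.2 + 1) k).getD a.1.1 false == a.2))) := hor.to₂
  have hchk : Computable (fun a : (ℕ × ℕ) × Bool => chk T a.1.1 a.1.2 a.2) :=
    (conjN_computable hQ hM).of_eq fun a => rfl
  have hc : ∀ b : Bool, Computable (fun p : ℕ × ℕ => chk T p.1 p.2 b) := fun b =>
    (hchk.comp (g := fun p : ℕ × ℕ => (p, b))
      (Computable.id.pair (Computable.const b))).of_eq fun p => rfl
  have hgood : Computable (fun p : ℕ × ℕ => good T p.1 p.2) :=
    Computable.cond (hc true)
      (Computable.cond (hc false) (Computable.const none) (Computable.const (some true)))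
      (Computable.cond (hc false) (Computable.const (some false)) (Computable.const none))
  have hpart : Partrec fun n : ℕ => Nat.rfindOpt (good T n) :=
    Partrec.rfindOpt hgood.to₂
  -- Semantics of `good T`
  have hfpre : ∀ m, T (pre f m) = true := fun m => hf m
  have hA : ∀ n N b, good T n N = some b → b = f n := by
    intro n N b h
    obtain ⟨h1, _⟩ := good_eq_some_iff.1 h
    have h2 := chk_iff.1 h1 (pre f (n+N+1)) (pre_length f _) (hfpre _)
    rw [getD_of_prefix (pre_prefix f (by omega))] at h2
    exact h2.symm
  have hmono : ∀ n N N' b, N ≤ N' → good T n N = some b → good T n N' = some b := by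
    intro n N N' b hNN h
    obtain ⟨h1, _⟩ := good_eq_some_iff.1 h
    have hb : b = f n := hA n N b h
    refine good_eq_some_iff.2 ⟨?_, ?_⟩
    · refine chk_iff.2 fun ρ hlen hTρ => ?_
      have htk : T (ρ.take (n+N+1)) = true := hpref _ ρ hTρ (List.take_prefix _ _)
      have hlt : (ρ.take (n+N+1)).length = n+N+1 := by rw [List.length_take]; omega
      have h3 := chk_iff.1 h1 _ hlt htk
      rwa [getD_take (by omega)] at h3
    · cases hcb : chk T n N' (!b) with
      | false => rfl
      | true =>
        have h3 := chk_iff.1 hcb (pre f (n+N'+1)) (pre_length f _) (hfpre _)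
        rw [getD_of_prefix (pre_prefix f (by omega))] at h3
        rw [hb] at h3
        cases f n <;> simp at h3
  have hex : ∀ n, ∃ N, good T n N = some (f n) := by
    intro n
    obtain ⟨N₀, hN₀⟩ := konig T hpref f huniq n
    refine ⟨N₀, good_eq_some_iff.2 ⟨?_, ?_⟩⟩
    · refine chk_iff.2 fun ρ hlen hTρ => ?_
      exact getD_of_prefix (hN₀ ρ hTρ (by omega))
    · cases hcb : chk T n N₀ (!(f n)) with
      | false => rfl
      | true =>
        have h3 := chk_iff.1 hcb (pre f (n+N₀+1)) (pre_length f _) (hfpre _)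
        rw [getD_of_prefix (pre_prefix f (by omega))] at h3
        cases f n <;> simp at h3
  refine hpart.of_eq_tot fun n => ?_
  have H : ∀ {a : Bool} {m k : ℕ}, m ≤ k → a ∈ good T n m → a ∈ good T n k := by
    intro a m k hmk ha
    rw [Option.mem_def] at *
    exact hmono n m k a hmk ha
  obtain ⟨N, hN⟩ := hex n
  exact (Nat.rfindOpt_mono H).2 ⟨N, Option.mem_def.2 hN⟩
end

section
/- Define h : ℕ → ℕ by: h n = the least s such that (Nat.Partrec.Code.evaln s (Denumerable.ofNat Nat.Partrec.Code n) n).isSome, if such an s exists, and h n = 0 otherwise (so h n = 0 exactly when n is not in the halting set ∅', and otherwise h n is the least stage at which n enters ∅'). Then there exists a computable T : List ℕ → Bool, closed under prefixes, such that h is the unique function f : ℕ → ℕ with T [f 0, f 1, …, f (n−1)] = true for every n. (That is, the settling-time function of ∅' is a Π⁰₁ singleton in Baire space.) -/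
open Nat.Partrec Denumerable

namespace Stmt10Aux

/-- Is `v` consistent (at list-length `m`) with being the settling time of `i`? -/
def check (i v m : ℕ) : Bool :=
  bif v == 0 then !(Nat.Partrec.Code.evaln m (ofNat Nat.Partrec.Code i) i).isSome
  else (Nat.Partrec.Code.evaln v (ofNat Nat.Partrec.Code i) i).isSome
    && !(Nat.Partrec.Code.evaln (v - 1) (ofNat Nat.Partrec.Code i) i).isSome

def T0 (l : List ℕ) : Bool :=
  (List.range l.length).all fun i => check i (l.getD i 0) l.length

theorem T0_iff (l : List ℕ) :
    T0 l = true ↔ ∀ i < l.length, check i (l.getD i 0) l.length = true := by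
  simp [T0, List.all_eq_true, List.mem_range]

theorem checkP : Primrec fun p : ℕ × ℕ × ℕ => check p.1 p.2.1 p.2.2 := by
  have hi : Primrec fun p : ℕ × ℕ × ℕ => p.1 := Primrec.fst
  have hv : Primrec fun p : ℕ × ℕ × ℕ => p.2.1 := Primrec.fst.comp Primrec.snd
  have hm : Primrec fun p : ℕ × ℕ × ℕ => p.2.2 := Primrec.snd.comp Primrec.snd
  have hev : ∀ {s : ℕ × ℕ × ℕ → ℕ}, Primrec s → Primrec fun p : ℕ × ℕ × ℕ =>
      (Nat.Partrec.Code.evaln (s p) (ofNat Nat.Partrec.Code p.1) p.1).isSome := by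
    intro s hs
    exact Primrec.option_isSome.comp (Nat.Partrec.Code.primrec_evaln.comp
      ((hs.pair ((Primrec.ofNat _).comp hi)).pair hi))
  have hnot : ∀ {f : ℕ × ℕ × ℕ → Bool}, Primrec f → Primrec fun p => !(f p) :=
    fun hf => (Primrec.dom_bool (!·)).comp hf
  refine (Primrec.cond
    (Primrec.eq.comp hv (Primrec.const 0)).decide
    (hnot (hev hm))
    ((Primrec.dom_bool₂ (· && ·)).comp (hev hv)
      (hnot (hev (Primrec.nat_sub.comp hv (Primrec.const 1)))))).of_eq fun p => ?_
  simp only [check]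
  rcases p with ⟨i, v, m⟩
  by_cases hv0 : v = 0 <;> simp [hv0, cond_eq_if]

theorem T0_primrec : Primrec T0 := by
  have hlen : Primrec fun l : List ℕ => l.length := Primrec.list_length
  have hh : Primrec₂ fun (l : List ℕ) (q : ℕ × Bool) =>
      (check q.1 (l.getD q.1 0) l.length && q.2) := by
    have hl : Primrec fun q : List ℕ × (ℕ × Bool) => q.1 := Primrec.fst
    have hi : Primrec fun q : List ℕ × (ℕ × Bool) => q.2.1 := Primrec.fst.comp Primrec.snd
    have hr : Primrec fun q : List ℕ × (ℕ × Bool) => q.2.2 := Primrec.snd.comp Primrec.snd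
    exact (Primrec.dom_bool₂ (· && ·)).comp
      (checkP.comp (hi.pair (((Primrec.list_getD 0).comp hl hi).pair (hlen.comp hl))))
      hr
  refine (Primrec.list_foldr (Primrec.list_range.comp hlen) (Primrec.const true) hh).of_eq
    fun l => ?_
  simp only [T0]
  induction (List.range l.length) with
  | nil => rfl
  | cons a t ih => simp only [List.foldr_cons, List.all_cons, ih]

end Stmt10Aux

/-- The settling-time function of the halting set `∅'` is a `Π⁰₁` singleton in Baire
space: `h n` is the least stage `s` at which the `n`-th code halts on input `n`
(and `h n = 0` if it never halts), and `h` is the unique infinite path of some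
computable prefix-closed tree on `ℕ`. -/
theorem stmt_10 (h : ℕ → ℕ)
    (hdef : ∀ n : ℕ, h n =
      sInf {s : ℕ |
        (Nat.Partrec.Code.evaln s (Denumerable.ofNat Nat.Partrec.Code n) n).isSome = true}) :
    ∃ T : List ℕ → Bool, Computable T ∧
      (∀ σ τ : List ℕ, T τ = true → σ <+: τ → T σ = true) ∧
      (∀ n : ℕ, T (List.ofFn fun i : Fin n => h i) = true) ∧
      (∀ f : ℕ → ℕ, (∀ n : ℕ, T (List.ofFn fun i : Fin n => f i) = true) → f = h) := by
  classical
  set c : ℕ → Nat.Partrec.Code := fun i => Denumerable.ofNat Nat.Partrec.Code i with hc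
  set E : ℕ → ℕ → Bool := fun i s => (Nat.Partrec.Code.evaln s (c i) i).isSome with hE
  have mono : ∀ i {s t : ℕ}, s ≤ t → E i s = true → E i t = true := by
    intro i s t hst hs
    rw [hE] at hs ⊢
    simp only [Option.isSome_iff_exists] at hs ⊢
    obtain ⟨x, hx⟩ := hs
    exact ⟨x, Nat.Partrec.Code.evaln_mono hst hx⟩
  have E0 : ∀ i, E i 0 = false := fun i => by
    simp [hE, Nat.Partrec.Code.evaln]
  have checkh : ∀ i v m, Stmt10Aux.check i v m = true ↔
      (v = 0 ∧ E i m = false) ∨ (v ≠ 0 ∧ E i v = true ∧ E i (v - 1) = false) := by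
    intro i v m
    by_cases hv : v = 0 <;> simp [Stmt10Aux.check, hv, hE, hc]
  refine ⟨Stmt10Aux.T0, Stmt10Aux.T0_primrec.to_comp, ?_, ?_, ?_⟩
  · -- prefix closed
    intro σ τ hτ hpre
    rw [Stmt10Aux.T0_iff] at hτ ⊢
    intro i hiσ
    have hiτ : i < τ.length := lt_of_lt_of_le hiσ hpre.length_le
    have hget : σ.getD i 0 = τ.getD i 0 := by
      rw [List.getD_eq_getElem _ _ hiσ, List.getD_eq_getElem _ _ hiτ,
        hpre.getElem hiσ]
    rw [hget]
    rcases (checkh i (τ.getD i 0) τ.length).1 (hτ i hiτ) with ⟨h0, hEm⟩ | hrest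
    · refine (checkh _ _ _).2 (Or.inl ⟨h0, ?_⟩)
      cases hEσ : E i σ.length with
      | false => rfl
      | true => rw [mono i hpre.length_le hEσ] at hEm; exact hEm
    · exact (checkh _ _ _).2 (Or.inr hrest)
  · -- h is a path
    intro n
    rw [Stmt10Aux.T0_iff]
    intro i hi
    simp only [List.length_ofFn] at hi ⊢
    have hget : (List.ofFn fun j : Fin n => h j).getD i 0 = h i := by
      rw [List.getD_eq_getElem _ _ (by simpa using hi)]
      simp
    rw [hget]
    refine (checkh i (h i) n).2 ?_
    by_cases hi0 : h i = 0
    · refine Or.inl ⟨hi0, ?_⟩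
      have hempty : ∀ s, E i s = false := by
        intro s
        by_contra hs
        have hs' : E i s = true := by simpa using hs
        have hne : {s : ℕ | E i s = true}.Nonempty := ⟨s, hs'⟩
        have hmem : h i ∈ {s : ℕ | E i s = true} := by
          rw [hdef i]; exact Nat.sInf_mem (by simpa [hE, hc] using hne)
        rw [hi0] at hmem
        rw [Set.mem_setOf_eq, E0 i] at hmem
        exact absurd hmem (by simp)
      exact hempty n
    · refine Or.inr ⟨hi0, ?_, ?_⟩
      · have hmem : h i ∈ {s : ℕ | E i s = true} := by
          rw [hdef i]
          refine Nat.sInf_mem ?_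
          by_contra hne
          rw [Set.not_nonempty_iff_eq_empty] at hne
          rw [hdef i] at hi0
          simp only [hE, hc] at hne
          rw [hne] at hi0
          simp at hi0
        exact hmem
      · by_contra hlt
        have hlt' : E i (h i - 1) = true := by simpa using hlt
        have hle : sInf {s : ℕ | (Nat.Partrec.Code.evaln s
            (Denumerable.ofNat Nat.Partrec.Code i) i).isSome = true} ≤ h i - 1 :=
          Nat.sInf_le (by simpa [hE, hc] using hlt')
        rw [← hdef i] at hle
        omega
  · -- uniqueness
    intro f hf
    funext i
    have key : ∀ m, i < m → Stmt10Aux.check i (f i) m = true := by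
      intro m him
      have hh := (Stmt10Aux.T0_iff _).1 (hf m) i (by simpa using him)
      have hget : (List.ofFn fun j : Fin m => f j).getD i 0 = f i := by
        rw [List.getD_eq_getElem _ _ (by simpa using him)]
        simp
      rw [hget] at hh
      simpa using hh
    by_cases hf0 : f i = 0
    · have hnone : ∀ s, E i s = false := by
        intro s
        by_contra hs
        have hs' : E i s = true := by simpa using hs
        have hbig : E i (max s (i + 1)) = true := mono i (le_max_left _ _) hs'
        have hk := (checkh i (f i) (max s (i + 1))).1
          (key _ (lt_of_lt_of_le (Nat.lt_succ_self i) (le_max_right _ _)))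
        rcases hk with ⟨_, hEm⟩ | ⟨hne, _⟩
        · rw [hbig] at hEm; exact absurd hEm (by simp)
        · exact hne hf0
      have hset : {s : ℕ | (Nat.Partrec.Code.evaln s
          (Denumerable.ofNat Nat.Partrec.Code i) i).isSome = true} = ∅ := by
        ext s
        simp only [Set.mem_setOf_eq, Set.mem_empty_iff_false, iff_false]
        intro hs
        have hq := hnone s
        rw [hE] at hq
        simp_all
      rw [hf0, hdef i, hset]
      simp
    · have hk := (checkh i (f i) (i + 1)).1 (key (i + 1) (Nat.lt_succ_self i))
      rcases hk with ⟨h0, _⟩ | ⟨_, hEv, hEv'⟩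
      · exact absurd h0 hf0
      · have hle : h i ≤ f i := by
          rw [hdef i]
          exact Nat.sInf_le (by simpa [hE, hc] using hEv)
        have hge : f i ≤ h i := by
          by_contra hlt
          push_neg at hlt
          have hmem : h i ∈ {s : ℕ | E i s = true} := by
            rw [hdef i]
            exact Nat.sInf_mem ⟨f i, by simpa [hE, hc] using hEv⟩
          have hq : E i (f i - 1) = true := mono i (by omega) hmem
          rw [hEv'] at hq
          exact absurd hq (by simp)
        omega
end

section
/- (Every effectively Σ⁰₂ singleton in Baire space is a Π⁰₁ singleton.) Let σ : ℕ → ℕ → List ℕ be a computable double sequence of finite strings and suppose f : ℕ → ℕ is such that {g : ℕ → ℕ | ∃ i, ∀ j, σ i j is not an initial segment of g} = {f}. Then there exists a computable T : List ℕ → Bool, closed under prefixes, such that f is the unique function g : ℕ → ℕ with T [g 0, g 1, …, g (n−1)] = true for every n. -/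
theorem pref_iff' (s τ : List ℕ) :
    ((List.range s.length).map (fun k => τ[k]?) = s.map some) ↔ s <+: τ := by
  constructor
  · intro h
    have hk : ∀ k (hk : k < s.length), τ[k]? = some s[k] := by
      intro k hk
      have := congrArg (fun l => l[k]?) h
      simpa [List.getElem?_map, List.getElem?_range, hk, List.getElem?_eq_getElem hk] using this
    have hlen : s.length ≤ τ.length := by
      rcases Nat.eq_zero_or_pos s.length with h0 | h0
      · omega
      · obtain ⟨h1, -⟩ := List.getElem?_eq_some_iff.mp (hk (s.length - 1) (by omega))
        omega
    rw [List.prefix_iff_eq_take]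
    apply List.ext_getElem?
    intro n
    rcases lt_or_ge n s.length with hn | hn
    · rw [List.getElem?_take_of_lt hn, hk n hn, List.getElem?_eq_getElem hn]
    · rw [List.getElem?_eq_none hn, List.getElem?_eq_none (by simp; omega)]
  · intro h
    apply List.ext_getElem?
    intro n
    rcases lt_or_ge n s.length with hn | hn
    · have h2 := h.getElem (i := n) hn
      simp [List.getElem?_map, List.getElem?_range, hn, List.getElem?_eq_getElem hn,
        List.getElem?_eq_getElem (hn.trans_le h.length_le), h2]
    · simp [List.getElem?_map, List.getElem?_range, List.getElem?_eq_none hn]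
      omega

/-- Boolean prefix test. -/
def prefTest (s τ : List ℕ) : Bool :=
  decide ((List.range s.length).map (fun k => τ[k]?) = s.map some)

theorem prefTest_eq (s τ : List ℕ) : prefTest s τ = true ↔ s <+: τ := by
  rw [prefTest, decide_eq_true_iff, pref_iff']

theorem prefTest_primrec : Primrec₂ prefTest := by
  have hA : Primrec fun p : List ℕ × List ℕ =>
      (List.range p.1.length).map (fun k => p.2[k]?) :=
    Primrec.list_map (Primrec.list_range.comp (Primrec.list_length.comp .fst))
      ((Primrec.list_getElem?.comp (Primrec.snd.comp .fst) .snd).to₂)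
  have hB : Primrec fun p : List ℕ × List ℕ => p.1.map some :=
    Primrec.list_map .fst ((Primrec.option_some.comp .snd).to₂)
  exact (Primrec.eq.comp hA hB).decide.to₂

/-- prefix between ofFn's -/
theorem ofFn_prefix (g : ℕ → ℕ) {L n : ℕ} (h : L ≤ n) :
    (List.ofFn fun k : Fin L => g k) <+: (List.ofFn fun k : Fin n => g k) := by
  rw [List.prefix_iff_eq_take]
  apply List.ext_getElem (by simp; omega)
  intro i h1 h2
  simp at h1
  simp [List.getElem_take, List.getElem_ofFn, h1]

/-- a prefix of an ofFn is an ofFn -/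
theorem prefix_ofFn (g : ℕ → ℕ) {n : ℕ} {s : List ℕ}
    (h : s <+: (List.ofFn fun k : Fin n => g k)) :
    s = List.ofFn fun k : Fin s.length => g k := by
  have hl : s.length ≤ n := by simpa using h.length_le
  apply List.ext_getElem (by simp)
  intro i h1 h2
  have := h.getElem (i := i) h1
  simpa using this

/-- Every effectively `Σ⁰₂` singleton in Baire space is a `Π⁰₁` singleton. -/
theorem stmt_11 (σ : ℕ → ℕ → List ℕ) (hσ : Computable₂ σ) (f : ℕ → ℕ)
    (hsingle : {g : ℕ → ℕ | ∃ i : ℕ, ∀ j : ℕ,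
        (List.ofFn fun k : Fin (σ i j).length => g k) ≠ σ i j} = {f}) :
    ∃ T : List ℕ → Bool, Computable T ∧
      (∀ σ' τ : List ℕ, T τ = true → σ' <+: τ → T σ' = true) ∧
      (∀ n : ℕ, T (List.ofFn fun i : Fin n => f i) = true) ∧
      (∀ g : ℕ → ℕ, (∀ n : ℕ, T (List.ofFn fun i : Fin n => g i) = true) → g = f) := by
  have hf : f ∈ {g : ℕ → ℕ | ∃ i : ℕ, ∀ j : ℕ,
      (List.ofFn fun k : Fin (σ i j).length => g k) ≠ σ i j} := by
    rw [hsingle]; rfl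
  obtain ⟨i₀, hi₀⟩ := hf
  refine ⟨fun τ => Nat.rec true (fun j b => b && !prefTest (σ i₀ j) τ) τ.length, ?_, ?_, ?_, ?_⟩
  · -- computability
    have hh : Computable₂ fun (τ : List ℕ) (p : ℕ × Bool) =>
        p.2 && !prefTest (σ i₀ p.1) τ := by
      have h1 : Computable fun q : List ℕ × ℕ × Bool => prefTest (σ i₀ q.2.1) q.1 :=
        prefTest_primrec.to_comp.comp
          (hσ.comp (Computable.const i₀) (Computable.fst.comp Computable.snd)) Computable.fst
      exact (Primrec.and.to_comp.comp
        (Computable.snd.comp Computable.snd)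
        (Primrec.not.to_comp.comp h1)).to₂
    exact Computable.nat_rec Primrec.list_length.to_comp (Computable.const true) hh
  all_goals {
    have key : ∀ (τ : List ℕ) (n : ℕ),
        (Nat.rec true (fun j b => b && !prefTest (σ i₀ j) τ) n : Bool) = true ↔
          ∀ j < n, ¬ σ i₀ j <+: τ := by
      intro τ n
      induction n with
      | zero => simp
      | succ m ih =>
        simp only [Nat.rec_add_one, Bool.and_eq_true, Bool.not_eq_true', ih,
          ← Bool.not_eq_true, prefTest_eq]
        constructor
        · rintro ⟨h1, h2⟩ j hj
          rcases Nat.lt_succ_iff_lt_or_eq.mp hj with h | rfl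
          · exact h1 j h
          · exact h2
        · intro h
          exact ⟨fun j hj => h j (Nat.lt_succ_of_lt hj), h m (Nat.lt_succ_self m)⟩
    first
    | -- prefix closed
      { intro s τ hτ hst
        rw [key] at hτ ⊢
        intro j hj hpre
        exact hτ j (hj.trans_le (hst.length_le)) (hpre.trans hst) }
    | -- f is a path
      { intro n
        rw [key]
        intro j _ hpre
        exact hi₀ j ((prefix_ofFn f hpre).symm)
      }
    | -- unique path
      { intro g hg
        have hgS : g ∈ ({f} : Set (ℕ → ℕ)) := by
          rw [← hsingle]
          refine ⟨i₀, fun j => ?_⟩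
          intro heq
          set n := max (j + 1) (σ i₀ j).length with hn
          have h1' := (key (List.ofFn fun i : Fin n => g i)
            (List.ofFn fun i : Fin n => g i).length).mp (hg n)
          have h1 := h1' j (by simp; omega)
          apply h1
          calc σ i₀ j = List.ofFn fun k : Fin (σ i₀ j).length => g k := heq.symm
            _ <+: _ := ofFn_prefix g (by omega)
        exact hgS }
  }
end
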